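/- arXiv:2202.10590 — 4 statements merged into one kernel-verified Lean document; each statement's English description precedes it below -/
import Mathlib

section
/- For any nonnegative reals h_1, …, h_T, it holds that ∑_{t=1}^T h_t / √(h_{1:t}) ≤ 2√(h_{1:T}), where h_{1:t} = ∑_{τ=1}^t h_τ and any summand with h_{1:t} = 0 is interpreted as 0. -/
open Finset

lemma key_step (a b : ℝ) (ha : 0 ≤ a) (hb : 0 ≤ b) :
    b / Real.sqrt (a + b) ≤ 2 * Real.sqrt (a + b) - 2 * Real.sqrt a := by
  rcases eq_or_lt_of_le (by linarith : (0:ℝ) ≤ a + b) with h0 | h0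
  · have hb0 : b = 0 := by linarith
    have ha0 : a = 0 := by linarith
    simp [hb0, ha0]
  · have hs : 0 < Real.sqrt (a + b) := Real.sqrt_pos.mpr h0
    rw [div_le_iff₀ hs]
    have hx : Real.sqrt a ^ 2 = a := Real.sq_sqrt ha
    have hy : Real.sqrt (a + b) ^ 2 = a + b := Real.sq_sqrt (by linarith)
    nlinarith [sq_nonneg (Real.sqrt a - Real.sqrt (a + b)), Real.sqrt_nonneg a,
      Real.sqrt_nonneg (a + b)]

/-- For nonnegative reals `h_1, …, h_T`, one has
`∑_{t=1}^T h_t / √(h_{1:t}) ≤ 2 √(h_{1:T})`, where `h_{1:t} = ∑_{τ=1}^t h_τ`.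
(Terms with `h_{1:t} = 0` are interpreted as `0`, which matches Lean's
convention that division by zero yields zero.) -/
theorem sum_div_sqrt_partial_sum_le (T : ℕ) (h : ℕ → ℝ) (hnonneg : ∀ t, 0 ≤ h t) :
    ∑ t ∈ Finset.Icc 1 T, h t / Real.sqrt (∑ τ ∈ Finset.Icc 1 t, h τ)
      ≤ 2 * Real.sqrt (∑ τ ∈ Finset.Icc 1 T, h τ) := by
  induction T with
  | zero => simp
  | succ T ih =>
    have h1 : 1 ≤ T + 1 := Nat.succ_le_succ (Nat.zero_le T)
    rw [Finset.sum_Icc_succ_top h1, Finset.sum_Icc_succ_top h1]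
    have hS : 0 ≤ ∑ τ ∈ Finset.Icc 1 T, h τ :=
      Finset.sum_nonneg fun i _ => hnonneg i
    have := key_step (∑ τ ∈ Finset.Icc 1 T, h τ) (h (T+1)) hS (hnonneg (T+1))
    linarith
end

section
/- For any real numbers G_1, …, G_T and the dual iterates λ_1 = 0, λ_{t+1} = max(0, (a_{t+1}/2) ∑_{i=1}^t G_i) (the maximizer of −λ²/a_{t+1} + λ ∑_{i=1}^t G_i over λ ≥ 0), the following holds for every λ ≥ 0: −∑_{t=1}^T λ_t G_t + λ ∑_{t=1}^T G_t ≤ λ²/a_T + (1/2) ∑_{t=1}^T a_t G_t². -/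
/-!
The quantity `Φ_η(s) = η · max(0, s)² / 4` is the value of `sup_{λ ≥ 0} (λ s − λ²/η)`, attained at
`λ = η/2 · max(0, s)`, so the FTRL iterate `λ_{t+1}` is the maximiser for the step size
`η_{t+1}` and the cumulative reward `S_t`. Adding `G_{t+1}` to `S_t` raises `Φ_{η_{t+1}}` by at most
`λ_{t+1} G_{t+1} + η_{t+1} G_{t+1}² / 4` (be-the-leader), and shrinking the step size only lowers
`Φ`. Telescoping, `Φ_{η_T}(S_T)` is at most the learner's reward plus `¼ ∑ η_t G_t²`, and the
comparator's reward `λ S_T` exceeds `Φ_{η_T}(S_T)` by at most `λ²/η_T`.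
-/

open Finset

noncomputable def dualPotential (η s : ℝ) : ℝ := η * max 0 s ^ 2 / 4

lemma dualPotential_mono {η η' : ℝ} (h : η ≤ η') (s : ℝ) :
    dualPotential η s ≤ dualPotential η' s := by
  unfold dualPotential
  gcongr

lemma sq_max_zero_add_le (s g : ℝ) : max 0 (s + g) ^ 2 ≤ (max 0 s + g) ^ 2 := by
  rcases le_total (s + g) 0 with hsg | hsg
  · rw [max_eq_left hsg, sq, zero_mul]
    exact sq_nonneg _
  · rw [max_eq_right hsg]
    exact pow_le_pow_left₀ hsg (by linarith [le_max_right 0 s]) 2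

lemma dualPotential_add_le {η : ℝ} (hη : 0 ≤ η) (s g : ℝ) :
    dualPotential η (s + g) ≤ dualPotential η s + η / 2 * max 0 s * g + η * g ^ 2 / 4 := by
  have h := mul_le_mul_of_nonneg_left (sq_max_zero_add_le s g) hη
  unfold dualPotential
  linarith

lemma mul_sub_sq_div_le_dualPotential {η : ℝ} (hη : 0 < η) {l : ℝ} (hl : 0 ≤ l) (s : ℝ) :
    l * s - l ^ 2 / η ≤ dualPotential η s := by
  have hs : l * s ≤ l * max 0 s := mul_le_mul_of_nonneg_left (le_max_right 0 s) hl
  have hsq : l * max 0 s - η * max 0 s ^ 2 / 4 ≤ l ^ 2 / η := by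
    rw [le_div_iff₀ hη]
    nlinarith [sq_nonneg (2 * l - η * max 0 s)]
  unfold dualPotential
  linarith

section FTRL

variable {η G lam : ℕ → ℝ}

lemma ftrl_iterate_eq (hη : ∀ t, 1 ≤ t → 0 < η t) (hlam1 : lam 1 = 0)
    (hlam : ∀ t, 1 ≤ t → lam (t + 1) = max 0 (η (t + 1) / 2 * ∑ i ∈ Icc 1 t, G i)) (t : ℕ) :
    lam (t + 1) = η (t + 1) / 2 * max 0 (∑ i ∈ Icc 1 t, G i) := by
  rcases Nat.eq_zero_or_pos t with rfl | ht
  · simp [hlam1]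
  · rw [hlam t ht, mul_max_of_nonneg _ _ (half_pos (hη (t + 1) (by omega))).le, mul_zero]

lemma dualPotential_le_ftrl_reward (hη : ∀ t, 1 ≤ t → 0 < η t)
    (hη_anti : ∀ t, 1 ≤ t → η (t + 1) ≤ η t) (hlam1 : lam 1 = 0)
    (hlam : ∀ t, 1 ≤ t → lam (t + 1) = max 0 (η (t + 1) / 2 * ∑ i ∈ Icc 1 t, G i)) (T : ℕ) :
    dualPotential (η T) (∑ t ∈ Icc 1 T, G t)
      ≤ ∑ t ∈ Icc 1 T, lam t * G t + 1 / 4 * ∑ t ∈ Icc 1 T, η t * G t ^ 2 := by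
  induction T with
  | zero => simp [dualPotential]
  | succ T ih =>
    set S := ∑ t ∈ Icc 1 T, G t
    have hshrink : dualPotential (η (T + 1)) S ≤ dualPotential (η T) S := by
      rcases Nat.eq_zero_or_pos T with rfl | hT
      · simp [S, dualPotential]
      · exact dualPotential_mono (hη_anti T hT) S
    have hstep := dualPotential_add_le (hη (T + 1) (by omega)).le S (G (T + 1))
    rw [← ftrl_iterate_eq hη hlam1 hlam] at hstep
    simp only [sum_Icc_succ_top (by omega : 1 ≤ T + 1)]
    linarith

theorem ftrl_regret_le (hη : ∀ t, 1 ≤ t → 0 < η t)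
    (hη_anti : ∀ t, 1 ≤ t → η (t + 1) ≤ η t) (hlam1 : lam 1 = 0)
    (hlam : ∀ t, 1 ≤ t → lam (t + 1) = max 0 (η (t + 1) / 2 * ∑ i ∈ Icc 1 t, G i))
    {T : ℕ} (hT : 1 ≤ T) {l : ℝ} (hl : 0 ≤ l) :
    (-∑ t ∈ Icc 1 T, lam t * G t) + l * ∑ t ∈ Icc 1 T, G t
      ≤ l ^ 2 / η T + 1 / 4 * ∑ t ∈ Icc 1 T, η t * G t ^ 2 := by
  have := mul_sub_sq_div_le_dualPotential (hη T hT) hl (∑ t ∈ Icc 1 T, G t)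
  have := dualPotential_le_ftrl_reward hη hη_anti hlam1 hlam T
  linarith

end FTRL

/-- **Dual FTRL (dual averaging) bound.** For real numbers `G_1, …, G_T`, step
sizes `a_t = a t^{−β}` with `a > 0`, `β ∈ [0,1)`, and dual iterates `λ_1 = 0`,
`λ_{t+1} = max(0, (a_{t+1}/2) ∑_{i=1}^t G_i)` (the maximizer of
`−λ²/a_{t+1} + λ ∑_{i=1}^t G_i` over `λ ≥ 0`), every `λ ≥ 0` satisfies
`−∑_{t=1}^T λ_t G_t + λ ∑_{t=1}^T G_t ≤ λ²/a_T + (1/2) ∑_{t=1}^T a_t G_t²`. -/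
theorem dual_ftrl_regret (T : ℕ) (hT : 1 ≤ T)
    (a β : ℝ) (ha : 0 < a) (hβ : β ∈ Set.Ico (0 : ℝ) 1)
    (aseq : ℕ → ℝ) (haseq : ∀ t, aseq t = a * (t : ℝ) ^ (-β))
    (G : ℕ → ℝ)
    (lam : ℕ → ℝ) (hlam1 : lam 1 = 0)
    (hlam : ∀ t, 1 ≤ t →
      lam (t + 1) = max 0 (aseq (t + 1) / 2 * ∑ i ∈ Finset.Icc 1 t, G i)) :
    ∀ l : ℝ, 0 ≤ l →
      (-∑ t ∈ Finset.Icc 1 T, lam t * G t) + l * ∑ t ∈ Finset.Icc 1 T, G t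
        ≤ l ^ 2 / aseq T + 1 / 2 * ∑ t ∈ Finset.Icc 1 T, aseq t * G t ^ 2 := by
  intro l hl
  have hpos : ∀ t, 1 ≤ t → 0 < aseq t := fun t ht => by
    rw [haseq]
    have : (0 : ℝ) < t := by exact_mod_cast ht
    positivity
  have hanti : ∀ t, 1 ≤ t → aseq (t + 1) ≤ aseq t := fun t ht => by
    rw [haseq, haseq]
    have : (0 : ℝ) < t := by exact_mod_cast ht
    refine mul_le_mul_of_nonneg_left (Real.rpow_le_rpow_of_nonpos this ?_ ?_) ha.le
    · push_cast; linarith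
    · linarith [hβ.1]
  have hsq : 0 ≤ ∑ t ∈ Icc 1 T, aseq t * G t ^ 2 :=
    sum_nonneg fun t ht => mul_nonneg (hpos t (mem_Icc.1 ht).1).le (sq_nonneg _)
  have := ftrl_regret_le hpos hanti hlam1 hlam hT hl
  linarith
end

section
/- The pessimistic expert's regret satisfies R^(p) = ∑_{t=1}^T c_t·(y⋆ − y_t^(p)) ≤ 2√(2C) · √(∑_{t=1}^T ‖c_t‖²) ≤ 2w√(2CT). -/
open Finset

/-- Dot product of real vectors indexed by a fintype. -/
def dot {ι : Type*} [Fintype ι] (a b : ι → ℝ) : ℝ := ∑ i, a i * b i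

/-- The single-cache feasible set `Y = {y ∈ [0,1]^N : ∑_n y_n ≤ C}`. -/
def FeasibleY (N C : ℕ) (y : Fin N → ℝ) : Prop :=
  (∀ n, y n ∈ Set.Icc (0 : ℝ) 1) ∧ ∑ n, y n ≤ (C : ℝ)

set_option maxHeartbeats 2000000 in
/-- **Pessimistic expert regret bound.** The pessimistic expert (FTRL with zero
predictions) satisfies
`R^{(p)} = ∑_{t=1}^T c_t·(y⋆ − y_t^{(p)}) ≤ 2√(2C)·√(∑_t ‖c_t‖²) ≤ 2w√(2CT)`. -/
theorem pessimistic_expert_regret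
    (N C T : ℕ) (hN : 1 ≤ N) (hC : 1 ≤ C) (hCN : C < N) (hT : 1 ≤ T)
    (w : ℝ) (wt : ℕ → ℝ) (hwt : ∀ t, wt t ∈ Set.Icc 0 w)
    (nt : ℕ → Fin N)
    -- utility gradients `c_t = w_t e_{n_t}`
    (c : ℕ → Fin N → ℝ) (hc : ∀ t, c t = fun n => if n = nt t then wt t else 0)
    -- aggregate gradient norms `g_{1:t}` and FTRL regularization parameters
    (G : ℕ → ℝ) (hG : ∀ t, G t = ∑ τ ∈ Finset.Icc 1 t, ∑ n, (c τ n) ^ 2)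
    (σ : ℝ) (hσ : σ = 2 / Real.sqrt (2 * (C : ℝ)))
    (σt : ℕ → ℝ) (hσt : ∀ t, σt t = σ * (Real.sqrt (G t) - Real.sqrt (G (t - 1))))
    -- pessimistic FTRL iterates
    (yp : ℕ → Fin N → ℝ)
    (hyp1 : FeasibleY N C (yp 1))
    (hstep : ∀ t, 1 ≤ t →
      FeasibleY N C (yp (t + 1)) ∧
      ∀ y', FeasibleY N C y' →
        (∑ τ ∈ Finset.Icc 1 t, σt τ / 2 * ∑ n, (yp (t + 1) n - yp τ n) ^ 2)
            - dot (fun n => ∑ τ ∈ Finset.Icc 1 t, c τ n) (yp (t + 1))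
          ≤ (∑ τ ∈ Finset.Icc 1 t, σt τ / 2 * ∑ n, (y' n - yp τ n) ^ 2)
            - dot (fun n => ∑ τ ∈ Finset.Icc 1 t, c τ n) y')
    -- best static configuration in hindsight
    (ystar : Fin N → ℝ) (hystar : FeasibleY N C ystar)
    (hystarmax : ∀ y, FeasibleY N C y →
      ∑ t ∈ Finset.Icc 1 T, dot (c t) y ≤ ∑ t ∈ Finset.Icc 1 T, dot (c t) ystar) :
    (∑ t ∈ Finset.Icc 1 T, dot (c t) (fun n => ystar n - yp t n)
        ≤ 2 * Real.sqrt (2 * (C : ℝ)) *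
            Real.sqrt (∑ t ∈ Finset.Icc 1 T, ∑ n, (c t n) ^ 2)) ∧
      (2 * Real.sqrt (2 * (C : ℝ)) * Real.sqrt (∑ t ∈ Finset.Icc 1 T, ∑ n, (c t n) ^ 2)
        ≤ 2 * w * Real.sqrt (2 * (C : ℝ) * (T : ℝ))) := by
    classical
  have hw0 : (0:ℝ) ≤ w := le_trans (hwt 0).1 (hwt 0).2
  have hCR : (0:ℝ) < (C:ℝ) := by exact_mod_cast hC
  have hsC : 0 < Real.sqrt (2*(C:ℝ)) := Real.sqrt_pos.2 (by linarith)
  have h2C : Real.sqrt (2*(C:ℝ)) * Real.sqrt (2*(C:ℝ)) = 2*(C:ℝ) :=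
    Real.mul_self_sqrt (by linarith)
  have hσpos : 0 < σ := by rw [hσ]; positivity
  have h2σ : 2/σ = Real.sqrt (2*(C:ℝ)) := by
    rw [hσ]; field_simp
  have hσC : σ * (C:ℝ) = Real.sqrt (2*(C:ℝ)) := by
    rw [hσ]; rw [div_mul_eq_mul_div, div_eq_iff hsC.ne']; linarith [h2C]
  -- gradient norms
  obtain ⟨g, hg⟩ : ∃ g : ℕ → ℝ, ∀ t, g t = ∑ n, (c t n)^2 := ⟨_, fun _ => rfl⟩
  have hgnn : ∀ t, 0 ≤ g t := fun t => (hg t) ▸ Finset.sum_nonneg fun n _ => sq_nonneg _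
  have hgw : ∀ t, g t ≤ w^2 := by
    intro t
    rw [hg t, hc t]
    have he : ∀ n : Fin N, ((if n = nt t then wt t else 0):ℝ)^2
        = if n = nt t then (wt t)^2 else 0 := by intro n; split <;> simp
    simp only [he, Finset.sum_ite_eq', Finset.mem_univ, if_true]
    exact pow_le_pow_left₀ (hwt t).1 (hwt t).2 2
  have hGg : ∀ t, G t = ∑ τ ∈ Finset.Icc 1 t, g τ := by
    intro t; rw [hG]; exact Finset.sum_congr rfl fun τ _ => (hg τ).symm
  have hG0 : G 0 = 0 := by rw [hGg]; simp
  have hGnn : ∀ t, 0 ≤ G t := fun t => (hGg t) ▸ Finset.sum_nonneg fun τ _ => hgnn τ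
  have hGrec : ∀ t : ℕ, G (t+1) = G t + g (t+1) := by
    intro t; rw [hGg, hGg, Finset.sum_Icc_succ_top (by omega : 1 ≤ t+1)]
  have hGmono : ∀ t : ℕ, G t ≤ G (t+1) := fun t => by
    rw [hGrec]; linarith [hgnn (t+1)]
  -- cumulative strong convexity
  obtain ⟨S, hSdef⟩ : ∃ S : ℕ → ℝ, ∀ t, S t = ∑ τ ∈ Finset.Icc 1 t, σt τ := ⟨_, fun _ => rfl⟩
  have hS : ∀ t, S t = σ * Real.sqrt (G t) := by
    intro t; induction t with
    | zero => rw [hSdef]; simp [hG0]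
    | succ s ih =>
        rw [hSdef, Finset.sum_Icc_succ_top (by omega : 1 ≤ s+1), ← hSdef, ih, hσt]
        simp only [Nat.add_sub_cancel]; ring
  have hSnn : ∀ t, 0 ≤ S t := fun t => by
    rw [hS]; exact mul_nonneg hσpos.le (Real.sqrt_nonneg _)
  have hσtnn : ∀ t, 1 ≤ t → 0 ≤ σt t := by
    intro t ht
    obtain ⟨s, rfl⟩ : ∃ s, t = s + 1 := ⟨t - 1, by omega⟩
    rw [hσt]; simp only [Nat.add_sub_cancel]
    exact mul_nonneg hσpos.le (sub_nonneg.2 (Real.sqrt_le_sqrt (hGmono s)))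
  -- feasibility of iterates
  have hfeas : ∀ t, 1 ≤ t → FeasibleY N C (yp t) := by
    intro t ht
    match t, ht with
    | 1, _ => exact hyp1
    | (s+2), _ => exact (hstep (s+1) (by omega)).1
  -- diameter bound
  have hdiam : ∀ y y', FeasibleY N C y → FeasibleY N C y' →
      ∑ n, (y n - y' n)^2 ≤ 2*(C:ℝ) := by
    intro y y' hy hy'
    calc ∑ n, (y n - y' n)^2 ≤ ∑ n, (y n + y' n) := by
          apply Finset.sum_le_sum; intro n _
          have h1 := hy.1 n; have h2 := hy'.1 n
          rw [Set.mem_Icc] at h1 h2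
          nlinarith [h1.1, h1.2, h2.1, h2.2]
      _ = (∑ n, y n) + (∑ n, y' n) := Finset.sum_add_distrib
      _ ≤ 2*(C:ℝ) := by linarith [hy.2, hy'.2]
  have hmidfeas : ∀ a b, FeasibleY N C a → FeasibleY N C b →
      FeasibleY N C (fun n => (a n + b n)/2) := by
    intro a b ha hb
    constructor
    · intro n
      have h1 := ha.1 n; have h2 := hb.1 n
      rw [Set.mem_Icc] at h1 h2 ⊢
      constructor <;> [linarith [h1.1, h2.1]; linarith [h1.2, h2.2]]
    · have : ∑ n, (a n + b n)/2 = ((∑ n, a n) + (∑ n, b n))/2 := by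
        rw [← Finset.sum_div, Finset.sum_add_distrib]
      rw [this]; linarith [ha.2, hb.2]
  -- the FTRL objective
  obtain ⟨Φ, hΦ⟩ : ∃ Φ : ℕ → (Fin N → ℝ) → ℝ, ∀ t y, Φ t y =
      (∑ τ ∈ Finset.Icc 1 t, σt τ / 2 * ∑ n, (y n - yp τ n) ^ 2)
        - dot (fun n => ∑ τ ∈ Finset.Icc 1 t, c τ n) y := ⟨_, fun _ _ => rfl⟩
  have hmin : ∀ t, 1 ≤ t → ∀ y', FeasibleY N C y' → Φ t (yp (t+1)) ≤ Φ t y' := by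
    intro t ht y' hy'; rw [hΦ, hΦ]; exact (hstep t ht).2 y' hy'
  have hΦ0 : ∀ y, Φ 0 y = 0 := by intro y; rw [hΦ]; simp [dot]
  -- midpoint identity
  have hmid : ∀ t a b, Φ t (fun n => (a n + b n)/2)
      = Φ t a / 2 + Φ t b / 2 - S t/8 * ∑ n, (a n - b n)^2 := by
    intro t a b
    rw [hΦ, hΦ, hΦ, hSdef]
    have hq : ∀ τ, ∑ n, ((a n + b n)/2 - yp τ n)^2
        = (∑ n, (a n - yp τ n)^2)/2 + (∑ n, (b n - yp τ n)^2)/2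
          - (∑ n, (a n - b n)^2)/4 := by
      intro τ
      rw [Finset.sum_congr rfl (fun n _ => show ((a n + b n)/2 - yp τ n)^2
          = (a n - yp τ n)^2/2 + (b n - yp τ n)^2/2 - (a n - b n)^2/4 from by ring)]
      rw [Finset.sum_sub_distrib, Finset.sum_add_distrib, ← Finset.sum_div,
        ← Finset.sum_div, ← Finset.sum_div]
    have hlin : dot (fun n => ∑ τ ∈ Finset.Icc 1 t, c τ n) (fun n => (a n + b n)/2)
        = dot (fun n => ∑ τ ∈ Finset.Icc 1 t, c τ n) a / 2
          + dot (fun n => ∑ τ ∈ Finset.Icc 1 t, c τ n) b / 2 := by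
      simp only [dot]
      rw [Finset.sum_div, Finset.sum_div, ← Finset.sum_add_distrib]
      exact Finset.sum_congr rfl fun n _ => by ring
    rw [Finset.sum_congr rfl (fun τ _ => by rw [hq τ]), hlin]
    rw [Finset.sum_congr rfl (fun τ (_ : τ ∈ Finset.Icc 1 t) =>
      show σt τ / 2 * ((∑ n, (a n - yp τ n)^2)/2 + (∑ n, (b n - yp τ n)^2)/2
          - (∑ n, (a n - b n)^2)/4)
        = (σt τ / 2 * ∑ n, (a n - yp τ n)^2)/2 + (σt τ / 2 * ∑ n, (b n - yp τ n)^2)/2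
          - σt τ * ((∑ n, (a n - b n)^2)/8) from by ring)]
    rw [Finset.sum_sub_distrib, Finset.sum_add_distrib, ← Finset.sum_div, ← Finset.sum_div,
      ← Finset.sum_mul]
    ring
  -- strong minimality
  have hstrong : ∀ t, 1 ≤ t → ∀ b, FeasibleY N C b →
      Φ t (yp (t+1)) + S t/4 * ∑ n, (yp (t+1) n - b n)^2 ≤ Φ t b := by
    intro t ht b hb
    have h1 := hmin t ht _ (hmidfeas (yp (t+1)) b (hfeas (t+1) (by omega)) hb)
    rw [hmid t (yp (t+1)) b] at h1
    linarith
  -- recursion for Φ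
  have hΦrec : ∀ t y, Φ (t+1) y
      = Φ t y + σt (t+1)/2 * ∑ n, (y n - yp (t+1) n)^2 - dot (c (t+1)) y := by
    intro t y
    rw [hΦ, hΦ, Finset.sum_Icc_succ_top (by omega : 1 ≤ t+1)]
    have hdot : dot (fun n => ∑ τ ∈ Finset.Icc 1 (t+1), c τ n) y
        = dot (fun n => ∑ τ ∈ Finset.Icc 1 t, c τ n) y + dot (c (t+1)) y := by
      simp only [dot, Finset.sum_Icc_succ_top (show 1 ≤ t+1 by omega), add_mul,
        Finset.sum_add_distrib]
    rw [hdot]; ring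
  -- Cauchy-Schwarz
  have hCS : ∀ t (v : Fin N → ℝ), dot (c t) v
      ≤ Real.sqrt (g t) * Real.sqrt (∑ n, (v n)^2) := by
    intro t v
    have h := Finset.sum_mul_sq_le_sq_mul_sq Finset.univ (c t) v
    have h1 : dot (c t) v ≤ Real.sqrt ((dot (c t) v)^2) := by
      rw [Real.sqrt_sq_eq_abs]; exact le_abs_self _
    calc dot (c t) v ≤ Real.sqrt ((dot (c t) v)^2) := h1
      _ ≤ Real.sqrt ((∑ n, (c t n)^2) * ∑ n, (v n)^2) := Real.sqrt_le_sqrt h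
      _ = Real.sqrt (g t) * Real.sqrt (∑ n, (v n)^2) := by
          rw [← hg t, Real.sqrt_mul (hgnn t)]
  -- per-step bound
  have hDt : ∀ t, 1 ≤ t → Φ t (yp t) - Φ t (yp (t+1))
      ≤ 2/σ * (Real.sqrt (G t) - Real.sqrt (G (t-1))) := by
    intro t ht
    obtain ⟨s, rfl⟩ : ∃ s, t = s + 1 := ⟨t - 1, by omega⟩
    simp only [Nat.add_sub_cancel]
    obtain ⟨d2, hd2⟩ : ∃ d : ℝ, d = ∑ n, (yp (s+1+1) n - yp (s+1) n)^2 := ⟨_, rfl⟩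
    have hd2nn : 0 ≤ d2 := hd2 ▸ Finset.sum_nonneg fun n _ => sq_nonneg _
    have hprev : Φ s (yp (s+1)) + S s/4 * d2 ≤ Φ s (yp (s+1+1)) := by
      rcases Nat.eq_zero_or_pos s with hs | hs
      · subst hs
        rw [hΦ0, hΦ0]
        have : S 0 = 0 := by rw [hSdef]; simp
        rw [this]; simp [hd2nn]
      · have h := hstrong s hs (yp (s+1+1)) (hfeas (s+1+1) (by omega))
        have heq : ∑ n, (yp (s+1) n - yp (s+1+1) n)^2 = d2 := by
          rw [hd2]; exact Finset.sum_congr rfl fun n _ => by ring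
        rw [heq] at h; exact h
    have e1 : Φ (s+1) (yp (s+1)) = Φ s (yp (s+1)) - dot (c (s+1)) (yp (s+1)) := by
      rw [hΦrec]; simp
    have e2 : Φ (s+1) (yp (s+1+1))
        = Φ s (yp (s+1+1)) + σt (s+1)/2 * d2 - dot (c (s+1)) (yp (s+1+1)) := by
      rw [hd2]; exact hΦrec s _
    have hdotsub : dot (c (s+1)) (yp (s+1+1)) - dot (c (s+1)) (yp (s+1))
        ≤ Real.sqrt (g (s+1)) * Real.sqrt d2 := by
      have he : dot (c (s+1)) (yp (s+1+1)) - dot (c (s+1)) (yp (s+1))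
          = dot (c (s+1)) (fun n => yp (s+1+1) n - yp (s+1) n) := by
        simp only [dot, mul_sub, Finset.sum_sub_distrib]
      rw [he, hd2]
      exact hCS (s+1) _
    have hσs := hσtnn (s+1) (by omega)
    have hSs1 : S (s+1) = S s + σt (s+1) := by
      rw [hSdef, hSdef, Finset.sum_Icc_succ_top (by omega : 1 ≤ s+1)]
    have key : Φ (s+1) (yp (s+1)) - Φ (s+1) (yp (s+1+1))
        ≤ -(S (s+1)/4) * d2 + Real.sqrt (g (s+1)) * Real.sqrt d2 := by
      rw [e1, e2]
      nlinarith [hprev, hdotsub, mul_nonneg hσs hd2nn]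
    rcases eq_or_lt_of_le (hGnn (s+1)) with hG1 | hG1
    · have hGs : G s = 0 := le_antisymm (by linarith [hGmono s]) (hGnn s)
      have hgs : g (s+1) = 0 := by have := hGrec s; linarith [hgnn (s+1), hGnn s]
      have hrhs : 2/σ * (Real.sqrt (G (s+1)) - Real.sqrt (G s)) = 0 := by
        rw [← hG1, hGs]; simp
      rw [hrhs]
      have : Real.sqrt (g (s+1)) = 0 := by rw [hgs, Real.sqrt_zero]
      nlinarith [key, mul_nonneg (hSnn (s+1)) hd2nn, Real.sqrt_nonneg d2]
    · have hsg : 0 < Real.sqrt (G (s+1)) := Real.sqrt_pos.2 hG1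
      have hSpos : 0 < S (s+1) := by rw [hS]; exact mul_pos hσpos hsg
      have hstep1 : -(S (s+1)/4) * d2 + Real.sqrt (g (s+1)) * Real.sqrt d2
          ≤ g (s+1) / S (s+1) := by
        rw [le_div_iff₀ hSpos]
        have h1 : Real.sqrt d2 ^ 2 = d2 := Real.sq_sqrt hd2nn
        have h2 : Real.sqrt (g (s+1)) ^2 = g (s+1) := Real.sq_sqrt (hgnn _)
        have h1' : S (s+1)^2 * Real.sqrt d2 ^2 = S (s+1)^2 * d2 := by rw [h1]
        have h4 := sq_nonneg (S (s+1)/2 * Real.sqrt d2 - Real.sqrt (g (s+1)))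
        nlinarith [h4, h1', h2]
      have hyx : Real.sqrt (G s) ≤ Real.sqrt (G (s+1)) := Real.sqrt_le_sqrt (hGmono s)
      have hynn := Real.sqrt_nonneg (G s)
      have hgeq : g (s+1) = (Real.sqrt (G (s+1)) - Real.sqrt (G s))
          * (Real.sqrt (G (s+1)) + Real.sqrt (G s)) := by
        have e3 : Real.sqrt (G (s+1))^2 = G (s+1) := Real.sq_sqrt (hGnn _)
        have e4 : Real.sqrt (G s)^2 = G s := Real.sq_sqrt (hGnn _)
        have e5 : (Real.sqrt (G (s+1)) - Real.sqrt (G s))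
            * (Real.sqrt (G (s+1)) + Real.sqrt (G s))
            = Real.sqrt (G (s+1))^2 - Real.sqrt (G s)^2 := by ring
        rw [e5, e3, e4]; linarith [hGrec s]
      have hlast : g (s+1) / S (s+1)
          ≤ 2/σ * (Real.sqrt (G (s+1)) - Real.sqrt (G s)) := by
        rw [hS, div_le_iff₀ (mul_pos hσpos hsg)]
        have he : 2/σ * (Real.sqrt (G (s+1)) - Real.sqrt (G s))
            * (σ * Real.sqrt (G (s+1)))
            = 2 * Real.sqrt (G (s+1)) * (Real.sqrt (G (s+1)) - Real.sqrt (G s)) := by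
          field_simp
        rw [he, hgeq]
        nlinarith [sq_nonneg (Real.sqrt (G (s+1)) - Real.sqrt (G s))]
      linarith [key, hstep1, hlast]
  -- telescoping sums
  have htelΦ : ∀ M : ℕ, ∑ t ∈ Finset.Icc 1 M, (Φ t (yp (t+1)) - Φ (t-1) (yp t))
      = Φ M (yp (M+1)) - Φ 0 (yp 1) := by
    intro M; induction M with
    | zero => simp
    | succ m ih =>
        rw [Finset.sum_Icc_succ_top (by omega : 1 ≤ m+1), ih]
        simp only [Nat.add_sub_cancel]; ring
  have htelG : ∀ M : ℕ, ∑ t ∈ Finset.Icc 1 M, (Real.sqrt (G t) - Real.sqrt (G (t-1)))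
      = Real.sqrt (G M) - Real.sqrt (G 0) := by
    intro M; induction M with
    | zero => simp
    | succ m ih =>
        rw [Finset.sum_Icc_succ_top (by omega : 1 ≤ m+1), ih]
        simp only [Nat.add_sub_cancel]; ring
  -- regret decomposition
  have hdsplit : ∀ t, dot (c t) (fun n => ystar n - yp t n)
      = dot (c t) ystar - dot (c t) (yp t) := by
    intro t; simp only [dot, mul_sub, Finset.sum_sub_distrib]
  have hR : ∑ t ∈ Finset.Icc 1 T, dot (c t) (fun n => ystar n - yp t n)
      = ∑ t ∈ Finset.Icc 1 T, dot (c t) ystar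
        + ∑ t ∈ Finset.Icc 1 T, (Φ t (yp t) - Φ t (yp (t+1)))
        + Φ T (yp (T+1)) := by
    have h1 : ∀ t ∈ Finset.Icc 1 T, dot (c t) (fun n => ystar n - yp t n)
        = dot (c t) ystar + ((Φ t (yp t) - Φ t (yp (t+1)))
          + (Φ t (yp (t+1)) - Φ (t-1) (yp t))) := by
      intro t htm
      have ht1 : 1 ≤ t := (Finset.mem_Icc.1 htm).1
      obtain ⟨s, rfl⟩ : ∃ s, t = s + 1 := ⟨t - 1, by omega⟩
      have hrec := hΦrec s (yp (s+1))
      simp only [sub_self, zero_pow, Finset.sum_const_zero, mul_zero, add_zero,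
        ne_eq, OfNat.ofNat_ne_zero, not_false_eq_true] at hrec
      simp only [Nat.add_sub_cancel]
      rw [hdsplit (s+1)]
      linarith [hrec]
    rw [Finset.sum_congr rfl h1, Finset.sum_add_distrib, Finset.sum_add_distrib,
      htelΦ T, hΦ0]
    ring
  -- bounding the terms
  have hdotswap : dot (fun n => ∑ τ ∈ Finset.Icc 1 T, c τ n) ystar
      = ∑ τ ∈ Finset.Icc 1 T, dot (c τ) ystar := by
    simp only [dot, Finset.sum_mul]; rw [Finset.sum_comm]
  have hbound1 : ∑ t ∈ Finset.Icc 1 T, dot (c t) ystar + Φ T (yp (T+1))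
      ≤ ∑ τ ∈ Finset.Icc 1 T, σt τ/2 * ∑ n, (ystar n - yp τ n)^2 := by
    have h := hmin T hT ystar hystar
    rw [hΦ T ystar, hdotswap] at h
    linarith
  have hbound2 : ∑ τ ∈ Finset.Icc 1 T, σt τ/2 * ∑ n, (ystar n - yp τ n)^2
      ≤ S T * (C:ℝ) := by
    calc ∑ τ ∈ Finset.Icc 1 T, σt τ/2 * ∑ n, (ystar n - yp τ n)^2
        ≤ ∑ τ ∈ Finset.Icc 1 T, σt τ/2 * (2*(C:ℝ)) := by
          apply Finset.sum_le_sum; intro τ hτ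
          have hτ1 : 1 ≤ τ := (Finset.mem_Icc.1 hτ).1
          exact mul_le_mul_of_nonneg_left
            (hdiam ystar (yp τ) hystar (hfeas τ hτ1))
            (div_nonneg (hσtnn τ hτ1) (by norm_num))
      _ = S T * (C:ℝ) := by
          rw [hSdef, Finset.sum_congr rfl (fun τ (_ : τ ∈ Finset.Icc 1 T) =>
            show σt τ/2 * (2*(C:ℝ)) = σt τ * (C:ℝ) from by ring), ← Finset.sum_mul]
  have hbound3 : ∑ t ∈ Finset.Icc 1 T, (Φ t (yp t) - Φ t (yp (t+1)))
      ≤ 2/σ * Real.sqrt (G T) := by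
    calc ∑ t ∈ Finset.Icc 1 T, (Φ t (yp t) - Φ t (yp (t+1)))
        ≤ ∑ t ∈ Finset.Icc 1 T, 2/σ * (Real.sqrt (G t) - Real.sqrt (G (t-1))) :=
          Finset.sum_le_sum fun t htm => hDt t (Finset.mem_Icc.1 htm).1
      _ = 2/σ * (Real.sqrt (G T) - Real.sqrt (G 0)) := by
          rw [← Finset.mul_sum, htelG T]
      _ = 2/σ * Real.sqrt (G T) := by rw [hG0, Real.sqrt_zero, sub_zero]
  have hGTsum : Real.sqrt (∑ t ∈ Finset.Icc 1 T, ∑ n, (c t n) ^ 2)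
      = Real.sqrt (G T) := by rw [← hG T]
  constructor
  · rw [hGTsum, hR]
    have hST := hS T
    calc ∑ t ∈ Finset.Icc 1 T, dot (c t) ystar
          + ∑ t ∈ Finset.Icc 1 T, (Φ t (yp t) - Φ t (yp (t+1))) + Φ T (yp (T+1))
        ≤ S T * (C:ℝ) + 2/σ * Real.sqrt (G T) := by linarith [hbound1, hbound2, hbound3]
      _ = 2 * Real.sqrt (2*(C:ℝ)) * Real.sqrt (G T) := by
          rw [hST, h2σ]
          have : σ * Real.sqrt (G T) * (C:ℝ) = (σ * (C:ℝ)) * Real.sqrt (G T) := by ring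
          rw [this, hσC]; ring
  · rw [hGTsum]
    have hGT : G T ≤ (T:ℝ) * w^2 := by
      rw [hGg]
      calc ∑ τ ∈ Finset.Icc 1 T, g τ ≤ ∑ τ ∈ Finset.Icc 1 T, w^2 :=
            Finset.sum_le_sum fun τ _ => hgw τ
        _ = (T:ℝ) * w^2 := by
            rw [Finset.sum_const, Nat.card_Icc]; simp [nsmul_eq_mul]
    have h2 : Real.sqrt (G T) ≤ w * Real.sqrt (T:ℝ) := by
      calc Real.sqrt (G T) ≤ Real.sqrt ((T:ℝ) * w^2) := Real.sqrt_le_sqrt hGT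
        _ = Real.sqrt (T:ℝ) * w := by
            rw [Real.sqrt_mul (Nat.cast_nonneg T), Real.sqrt_sq hw0]
        _ = w * Real.sqrt (T:ℝ) := mul_comm _ _
    have h3 : Real.sqrt (2*(C:ℝ)*(T:ℝ)) = Real.sqrt (2*(C:ℝ)) * Real.sqrt (T:ℝ) :=
      Real.sqrt_mul (by linarith) _
    rw [h3]
    nlinarith [hsC, Real.sqrt_nonneg (T:ℝ), Real.sqrt_nonneg (G T), h2]
end

section
/- Algorithm XC ensures the regret bound R^(xc) = ∑_{t=1}^T c_t·(y⋆ − y_t) ≤ 2w√(2T) + A, where A = min{ R^(p), R^(o) } satisfies −wT ≤ A ≤ 2w√(2CT); in particular R^(xc) ≤ 2w√(2T) + 2w√(2CT). -/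
/-!
The combined decision is linear in the weights, so `R⁽ˣᶜ⁾` exceeds the regret of either expert by
exactly the regret of the meta-learner on the two-expert problem with utilities `l_t`. Since `Δ`
lies on the line `u⁽¹⁾ + u⁽²⁾ = 1`, the projected step is gradient ascent on `u⁽¹⁾ ∈ [0, 1]` with
gradient `l_t⁽¹⁾ - l_t⁽²⁾ ∈ [-w, w]` and the halved step `1 / (2w√t)`; one-dimensional online
gradient ascent then has regret at most `(3/2) w √T ≤ 2w√(2T)`. The lower bound `-wT` holds round by
round, since `0 ≤ c_t·y ≤ w` on `Y`.

The bound on `R⁽ᵖ⁾` is the FTRL lemma for adaptive quadratic regularisers. The objective minimised by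
`y_{t+1}` is `σ_{1:t}`-strongly convex with `σ_{1:t} = σ √g_{1:t}`, so comparing the minimality of
`y_t` and of `y_{t+1}` gives `σ_{1:t} ‖y_{t+1} - y_t‖ ≤ ‖c_t‖`, and the drift `c_t·(y_{t+1} - y_t)` is
at most `‖c_t‖² / (σ √g_{1:t}) ≤ (2/σ)(√g_{1:t} - √g_{1:t-1})`. The regulariser contributes at most
`σ √g_{1:T} · diam(Y)² / 2` with `diam(Y)² ≤ 2C`; for `σ = 2/√(2C)` both parts equal
`√(2C) √g_{1:T} ≤ w √(2CT)`.
-/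

open Finset

/-- The 2-dimensional probability simplex `Δ`. -/
def Simplex2 (u : Fin 2 → ℝ) : Prop := 0 ≤ u 0 ∧ 0 ≤ u 1 ∧ u 0 + u 1 = 1

open Filter Topology
open scoped RealInnerProductSpace

lemma sum_Icc_sub_pred (f : ℕ → ℝ) (T : ℕ) :
    ∑ t ∈ Icc 1 T, (f t - f (t - 1)) = f T - f 0 := by
  induction T with
  | zero => simp
  | succ T ih => rw [sum_Icc_succ_top (by omega), ih, Nat.add_sub_cancel]; ring

lemma sum_Icc_mul_sub_le {a d : ℕ → ℝ} {B : ℝ} (ha : Monotone a) (ha₀ : 0 ≤ a 0)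
    (hd : ∀ t, 1 ≤ t → 0 ≤ d t ∧ d t ≤ B) (T : ℕ) :
    ∑ t ∈ Icc 1 T, a t * (d t - d (t + 1)) ≤ a T * B := by
  suffices h : ∑ t ∈ Icc 1 T, a t * (d t - d (t + 1)) ≤ a T * (B - d (T + 1)) by
    have := hd (T + 1) (by omega)
    nlinarith [ha₀.trans (ha (Nat.zero_le T))]
  induction T with
  | zero => simpa using mul_nonneg ha₀ (sub_nonneg.2 (hd 1 le_rfl).2)
  | succ T ih =>
    rw [sum_Icc_succ_top (by omega)]
    have hmono : a T * (B - d (T + 1)) ≤ a (T + 1) * (B - d (T + 1)) :=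
      mul_le_mul_of_nonneg_right (ha T.le_succ) (sub_nonneg.2 (hd (T + 1) (by omega)).2)
    linarith

lemma inv_sqrt_le_two_mul_sqrt_sub_sqrt {t : ℝ} (ht : 1 ≤ t) :
    (√t)⁻¹ ≤ 2 * (√t - √(t - 1)) := by
  have hpos : 0 < √t := Real.sqrt_pos.2 (by linarith)
  have hsq : √t ^ 2 = t := Real.sq_sqrt (by linarith)
  have hsq' : √(t - 1) ^ 2 = t - 1 := Real.sq_sqrt (by linarith)
  have hle : √(t - 1) ≤ √t := Real.sqrt_le_sqrt (by linarith)
  rw [inv_le_iff_one_le_mul₀' hpos]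
  nlinarith [Real.sqrt_nonneg (t - 1)]

lemma sum_Icc_inv_sqrt_le (T : ℕ) : ∑ t ∈ Icc 1 T, (√(t : ℝ))⁻¹ ≤ 2 * √(T : ℝ) := by
  calc ∑ t ∈ Icc 1 T, (√(t : ℝ))⁻¹
      ≤ ∑ t ∈ Icc 1 T, 2 * (√(t : ℝ) - √((t - 1 : ℕ) : ℝ)) := by
        refine sum_le_sum fun t ht => ?_
        have ht1 : 1 ≤ t := (mem_Icc.1 ht).1
        rw [Nat.cast_sub ht1, Nat.cast_one]
        exact inv_sqrt_le_two_mul_sqrt_sub_sqrt (by exact_mod_cast ht1)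
    _ = 2 * √(T : ℝ) := by
        rw [← mul_sum, sum_Icc_sub_pred (fun t => √(t : ℝ))]; simp

lemma sub_le_two_mul_sqrt_mul_sub_sqrt {a b : ℝ} (ha : 0 ≤ a) (hab : a ≤ b) :
    b - a ≤ 2 * √b * (√b - √a) := by
  have := Real.sq_sqrt ha
  have := Real.sq_sqrt (ha.trans hab)
  nlinarith [Real.sqrt_le_sqrt hab, Real.sqrt_nonneg a]

lemma nonneg_of_forall_mul_add_sq_mul_nonneg {a b : ℝ}
    (h : ∀ r : ℝ, 0 < r → r ≤ 1 → 0 ≤ r * b + r ^ 2 * a) : 0 ≤ b := by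
  have hlim : Tendsto (fun r : ℝ => b + r * a) (𝓝[>] 0) (𝓝 b) := by
    have : Tendsto (fun r : ℝ => b + r * a) (𝓝 0) (𝓝 (b + 0 * a)) :=
      (continuous_const.add (continuous_id.mul continuous_const)).tendsto 0
    simpa using this.mono_left nhdsWithin_le_nhds
  refine ge_of_tendsto hlim ?_
  filter_upwards [Ioc_mem_nhdsGT one_pos] with r ⟨hr₀, hr₁⟩
  have := h r hr₀ hr₁
  have h' : 0 ≤ r * (b + r * a) := by linarith
  exact nonneg_of_mul_nonneg_right h' hr₀

section InnerProductSpace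

variable {E : Type*} [NormedAddCommGroup E]

noncomputable def cumSqNorm (g : ℕ → E) (t : ℕ) : ℝ := ∑ τ ∈ Icc 1 t, ‖g τ‖ ^ 2

noncomputable def adaptiveWeight (σ₀ : ℝ) (g : ℕ → E) (t : ℕ) : ℝ :=
  σ₀ * (√(cumSqNorm g t) - √(cumSqNorm g (t - 1)))

section AdaptiveWeight

variable {g : ℕ → E} {σ₀ : ℝ}

lemma cumSqNorm_nonneg (t : ℕ) : 0 ≤ cumSqNorm g t :=
  sum_nonneg fun _ _ => sq_nonneg _

lemma cumSqNorm_succ (t : ℕ) : cumSqNorm g (t + 1) = cumSqNorm g t + ‖g (t + 1)‖ ^ 2 :=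
  sum_Icc_succ_top (by omega) _

lemma cumSqNorm_mono : Monotone (cumSqNorm g) := fun _ _ hst =>
  sum_le_sum_of_subset_of_nonneg (Icc_subset_Icc_right hst) fun _ _ _ => sq_nonneg _

lemma sum_Icc_sqrt_cumSqNorm_sub (T : ℕ) :
    ∑ t ∈ Icc 1 T, (√(cumSqNorm g t) - √(cumSqNorm g (t - 1))) = √(cumSqNorm g T) := by
  rw [sum_Icc_sub_pred (fun t => √(cumSqNorm g t))]
  simp [cumSqNorm]

lemma sqrt_cumSqNorm_le {w : ℝ} (hw : 0 ≤ w) (hg : ∀ t, ‖g t‖ ^ 2 ≤ w ^ 2) (T : ℕ) :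
    √(cumSqNorm g T) ≤ w * √(T : ℝ) := by
  rw [← Real.sqrt_sq hw, ← Real.sqrt_mul (sq_nonneg w), mul_comm (w ^ 2)]
  refine Real.sqrt_le_sqrt ((sum_le_sum fun t _ => hg t).trans ?_)
  simp

lemma adaptiveWeight_nonneg (hσ₀ : 0 ≤ σ₀) (t : ℕ) : 0 ≤ adaptiveWeight σ₀ g t :=
  mul_nonneg hσ₀ (sub_nonneg.2 (Real.sqrt_le_sqrt (cumSqNorm_mono (Nat.sub_le t 1))))

lemma sum_adaptiveWeight (t : ℕ) :
    ∑ τ ∈ Icc 1 t, adaptiveWeight σ₀ g τ = σ₀ * √(cumSqNorm g t) := by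
  rw [← sum_Icc_sqrt_cumSqNorm_sub (g := g), mul_sum]
  rfl

end AdaptiveWeight

variable [InnerProductSpace ℝ E]

theorem IsMinOn.add_half_mul_norm_sub_sq_le {K : Set E} (hK : Convex ℝ K) {f : E → ℝ}
    {p d : E} {a : ℝ} (hf : ∀ y, f y = f p + ⟪d, y - p⟫ + a / 2 * ‖y - p‖ ^ 2)
    (hp : p ∈ K) (hmin : IsMinOn f K p) {v : E} (hv : v ∈ K) :
    f p + a / 2 * ‖v - p‖ ^ 2 ≤ f v := by
  suffices 0 ≤ ⟪d, v - p⟫ by rw [hf v]; linarith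
  refine nonneg_of_forall_mul_add_sq_mul_nonneg (a := a / 2 * ‖v - p‖ ^ 2) fun r hr₀ hr₁ => ?_
  have hle := isMinOn_iff.1 hmin _ (hK.add_smul_sub_mem hp hv ⟨hr₀.le, hr₁⟩)
  rw [hf (p + r • (v - p)), add_sub_cancel_left, inner_smul_right, norm_smul,
    Real.norm_of_nonneg hr₀.le] at hle
  linarith

theorem IsMinOn.norm_sub_sq_add_norm_sub_sq_le {K : Set E} (hK : Convex ℝ K) {p z v : E}
    (hp : p ∈ K) (hmin : IsMinOn (fun y => ‖y - z‖ ^ 2) K p) (hv : v ∈ K) :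
    ‖p - z‖ ^ 2 + ‖v - p‖ ^ 2 ≤ ‖v - z‖ ^ 2 := by
  have hf : ∀ y, ‖y - z‖ ^ 2 = ‖p - z‖ ^ 2 + ⟪(2 : ℝ) • (p - z), y - p⟫ + 2 / 2 * ‖y - p‖ ^ 2 := by
    intro y
    rw [show y - z = (y - p) + (p - z) by abel, norm_add_sq_real, real_inner_smul_left,
      real_inner_comm]
    ring
  simpa using hmin.add_half_mul_norm_sub_sq_le hK hf hp hv

lemma mul_inner_le_norm_sq {S : ℝ} {u h : E} (hS : 0 ≤ S) (hSh : S * ‖h‖ ^ 2 ≤ ⟪u, h⟫) :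
    S * ⟪u, h⟫ ≤ ‖u‖ ^ 2 := by
  have hcs : ⟪u, h⟫ ≤ ‖u‖ * ‖h‖ := real_inner_le_norm u h
  rcases (norm_nonneg h).eq_or_lt with h0 | hpos
  · rw [← h0, mul_zero] at hcs
    nlinarith [norm_nonneg u]
  · have hSh' : S * ‖h‖ ≤ ‖u‖ := le_of_mul_le_mul_right (by nlinarith) hpos
    nlinarith [norm_nonneg u]

lemma ogd_step_inner_le {K : Set E} (hK : Convex ℝ K) {x p g s : E} {β : ℝ} (hβ : 0 < β)
    (hp : p ∈ K) (hmin : IsMinOn (fun y => ‖y - (x + β⁻¹ • g)‖ ^ 2) K p) (hs : s ∈ K) :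
    ⟪g, s - x⟫ ≤ β / 2 * (‖s - x‖ ^ 2 - ‖s - p‖ ^ 2) + ‖g‖ ^ 2 / (2 * β) := by
  have hpyth := hmin.norm_sub_sq_add_norm_sub_sq_le hK hp hs
  have hexp : ‖s - (x + β⁻¹ • g)‖ ^ 2 = ‖s - x‖ ^ 2 - 2 * β⁻¹ * ⟪g, s - x⟫ + β⁻¹ ^ 2 * ‖g‖ ^ 2 := by
    rw [show s - (x + β⁻¹ • g) = (s - x) - β⁻¹ • g by abel, norm_sub_sq_real, inner_smul_right,
      norm_smul, Real.norm_of_nonneg (inv_nonneg.2 hβ.le), real_inner_comm]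
    ring
  rw [hexp] at hpyth
  have h : β * ‖s - p‖ ^ 2 ≤ β * ‖s - x‖ ^ 2 - 2 * ⟪g, s - x⟫ + β⁻¹ * ‖g‖ ^ 2 := by
    have := mul_le_mul_of_nonneg_left hpyth hβ.le
    field_simp at this ⊢
    nlinarith [sq_nonneg ‖p - (x + β⁻¹ • g)‖]
  have hdiv : ‖g‖ ^ 2 / (2 * β) = β⁻¹ * ‖g‖ ^ 2 / 2 := by ring
  linarith

theorem ogd_regret_le {K : Set E} (hK : Convex ℝ K) {D : ℝ}
    (hD : ∀ a ∈ K, ∀ b ∈ K, ‖a - b‖ ≤ D) {x g : ℕ → E} {β : ℕ → ℝ}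
    (hβ : Monotone β) (hβ₀ : 0 ≤ β 0) (hβ_pos : ∀ t, 1 ≤ t → 0 < β t) (hx₁ : x 1 ∈ K)
    (hstep : ∀ t, 1 ≤ t →
      x (t + 1) ∈ K ∧ IsMinOn (fun y => ‖y - (x t + (β t)⁻¹ • g t)‖ ^ 2) K (x (t + 1)))
    {s : E} (hs : s ∈ K) (T : ℕ) :
    ∑ t ∈ Icc 1 T, ⟪g t, s - x t⟫ ≤ β T * D ^ 2 / 2 + ∑ t ∈ Icc 1 T, ‖g t‖ ^ 2 / (2 * β t) := by
  have hxK : ∀ t, 1 ≤ t → x t ∈ K := Nat.le_induction hx₁ fun t ht _ => (hstep t ht).1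
  have habel := sum_Icc_mul_sub_le (a := fun t => β t / 2) (d := fun t => ‖s - x t‖ ^ 2)
    (B := D ^ 2) (fun i j hij => by linarith [hβ hij]) (by linarith)
    (fun t ht => ⟨sq_nonneg _, pow_le_pow_left₀ (norm_nonneg _) (hD s hs (x t) (hxK t ht)) 2⟩) T
  calc ∑ t ∈ Icc 1 T, ⟪g t, s - x t⟫
      ≤ ∑ t ∈ Icc 1 T, (β t / 2 * (‖s - x t‖ ^ 2 - ‖s - x (t + 1)‖ ^ 2)
          + ‖g t‖ ^ 2 / (2 * β t)) := sum_le_sum fun t ht => by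
        have ht₁ := (mem_Icc.1 ht).1
        exact ogd_step_inner_le hK (hβ_pos t ht₁) (hstep t ht₁).1 (hstep t ht₁).2 hs
    _ ≤ β T * D ^ 2 / 2 + ∑ t ∈ Icc 1 T, ‖g t‖ ^ 2 / (2 * β t) := by
      rw [sum_add_distrib]; linarith

noncomputable def ftrlObjective (σ : ℕ → ℝ) (x g : ℕ → E) (t : ℕ) (y : E) : ℝ :=
  ∑ τ ∈ Icc 1 t, (σ τ / 2 * ‖y - x τ‖ ^ 2 - ⟪g τ, y⟫)

section FTRL

variable {σ : ℕ → ℝ} {x g : ℕ → E} {K : Set E}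

@[simp]
lemma ftrlObjective_zero (y : E) : ftrlObjective σ x g 0 y = 0 := by
  simp [ftrlObjective]

lemma ftrlObjective_succ (t : ℕ) (y : E) :
    ftrlObjective σ x g (t + 1) y
      = ftrlObjective σ x g t y + (σ (t + 1) / 2 * ‖y - x (t + 1)‖ ^ 2 - ⟪g (t + 1), y⟫) :=
  sum_Icc_succ_top (by omega) _

lemma ftrlObjective_eq_quadratic (t : ℕ) (p y : E) :
    ftrlObjective σ x g t y = ftrlObjective σ x g t p
      + ⟪∑ τ ∈ Icc 1 t, (σ τ • (p - x τ) - g τ), y - p⟫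
      + (∑ τ ∈ Icc 1 t, σ τ) / 2 * ‖y - p‖ ^ 2 := by
  simp only [ftrlObjective, sum_inner, sum_div, sum_mul, ← sum_add_distrib]
  refine sum_congr rfl fun τ _ => ?_
  rw [show y - x τ = (y - p) + (p - x τ) by abel, norm_add_sq_real,
    inner_sub_left (σ τ • (p - x τ)), real_inner_smul_left, inner_sub_right (g τ),
    real_inner_comm (p - x τ)]
  ring

lemma ftrlObjective_add_le_of_isMinOn (hK : Convex ℝ K) {t : ℕ} {p : E} (hp : p ∈ K)
    (hmin : IsMinOn (ftrlObjective σ x g t) K p) {v : E} (hv : v ∈ K) :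
    ftrlObjective σ x g t p + (∑ τ ∈ Icc 1 t, σ τ) / 2 * ‖v - p‖ ^ 2
      ≤ ftrlObjective σ x g t v :=
  hmin.add_half_mul_norm_sub_sq_le hK (ftrlObjective_eq_quadratic t p) hp hv

lemma ftrl_stability (hK : Convex ℝ K) (hxK : ∀ t, 1 ≤ t → x t ∈ K)
    (hmin : ∀ t, IsMinOn (ftrlObjective σ x g t) K (x (t + 1))) (t : ℕ) :
    (∑ τ ∈ Icc 1 (t + 1), σ τ) * ‖x (t + 2) - x (t + 1)‖ ^ 2
      ≤ ⟪g (t + 1), x (t + 2) - x (t + 1)⟫ := by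
  have h₁ := ftrlObjective_add_le_of_isMinOn hK (hxK (t + 1) (by omega)) (hmin t)
    (hxK (t + 2) (by omega))
  have h₂ := ftrlObjective_add_le_of_isMinOn hK (hxK (t + 2) (by omega)) (hmin (t + 1))
    (hxK (t + 1) (by omega))
  rw [ftrlObjective_succ, ftrlObjective_succ, sub_self, norm_zero, norm_sub_rev (x (t + 1))] at h₂
  rw [sum_Icc_succ_top (by omega)] at h₂ ⊢
  rw [inner_sub_right]
  linarith

lemma ftrl_be_the_leader (hxK : ∀ t, 1 ≤ t → x t ∈ K)
    (hmin : ∀ t, IsMinOn (ftrlObjective σ x g t) K (x (t + 1))) (T : ℕ) :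
    ∑ t ∈ Icc 1 T, (σ t / 2 * ‖x (t + 1) - x t‖ ^ 2 - ⟪g t, x (t + 1)⟫)
      ≤ ftrlObjective σ x g T (x (T + 1)) := by
  induction T with
  | zero => simp
  | succ T ih =>
    rw [sum_Icc_succ_top (by omega), ftrlObjective_succ]
    linarith [isMinOn_iff.1 (hmin T) _ (hxK (T + 1 + 1) (by omega))]

theorem ftrl_regret_le_of_isMinOn (hxK : ∀ t, 1 ≤ t → x t ∈ K)
    (hmin : ∀ t, IsMinOn (ftrlObjective σ x g t) K (x (t + 1))) {s : E} (hs : s ∈ K) (T : ℕ) :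
    ∑ t ∈ Icc 1 T, ⟪g t, s - x t⟫
      ≤ ∑ t ∈ Icc 1 T, σ t / 2 * ‖s - x t‖ ^ 2
        + ∑ t ∈ Icc 1 T, (⟪g t, x (t + 1) - x t⟫ - σ t / 2 * ‖x (t + 1) - x t‖ ^ 2) := by
  have hbtl := (ftrl_be_the_leader hxK hmin T).trans (isMinOn_iff.1 (hmin T) s hs)
  simp only [ftrlObjective, inner_sub_right, sum_sub_distrib] at hbtl ⊢
  linarith

end FTRL

section AdaptiveFTRL

variable {g x : ℕ → E} {σ₀ : ℝ} {K : Set E}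

lemma ftrl_adaptiveWeight_inner_le (hK : Convex ℝ K) (hσ₀ : 0 < σ₀)
    (hxK : ∀ t, 1 ≤ t → x t ∈ K)
    (hmin : ∀ t, IsMinOn (ftrlObjective (adaptiveWeight σ₀ g) x g t) K (x (t + 1))) (t : ℕ) :
    ⟪g (t + 1), x (t + 2) - x (t + 1)⟫
      ≤ 2 / σ₀ * (√(cumSqNorm g (t + 1)) - √(cumSqNorm g t)) := by
  have hstab := ftrl_stability hK hxK hmin t
  rw [sum_adaptiveWeight] at hstab
  have hkey := mul_inner_le_norm_sq (mul_nonneg hσ₀.le (Real.sqrt_nonneg _)) hstab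
  have hG := cumSqNorm_succ (g := g) t
  have hsqrt := sub_le_two_mul_sqrt_mul_sub_sqrt (cumSqNorm_nonneg (g := g) t)
    (cumSqNorm_mono t.le_succ)
  have hmono : √(cumSqNorm g t) ≤ √(cumSqNorm g (t + 1)) :=
    Real.sqrt_le_sqrt (cumSqNorm_mono t.le_succ)
  rcases (Real.sqrt_nonneg (cumSqNorm g (t + 1))).eq_or_lt with h0 | hpos
  · have hg : ‖g (t + 1)‖ ^ 2 = 0 := by
      rw [← h0] at hsqrt; nlinarith [sq_nonneg ‖g (t + 1)‖]
    rw [norm_eq_zero.1 (pow_eq_zero_iff two_ne_zero |>.1 hg), inner_zero_left]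
    exact mul_nonneg (by positivity) (sub_nonneg.2 hmono)
  · rw [div_mul_eq_mul_div, le_div_iff₀ hσ₀]
    refine le_of_mul_le_mul_left ?_ hpos
    nlinarith

lemma ftrl_adaptiveWeight_sum_drift_le (hK : Convex ℝ K) (hσ₀ : 0 < σ₀)
    (hxK : ∀ t, 1 ≤ t → x t ∈ K)
    (hmin : ∀ t, IsMinOn (ftrlObjective (adaptiveWeight σ₀ g) x g t) K (x (t + 1))) (T : ℕ) :
    ∑ t ∈ Icc 1 T, (⟪g t, x (t + 1) - x t⟫ - adaptiveWeight σ₀ g t / 2 * ‖x (t + 1) - x t‖ ^ 2)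
      ≤ 2 / σ₀ * √(cumSqNorm g T) := by
  rw [← sum_Icc_sqrt_cumSqNorm_sub, mul_sum]
  refine sum_le_sum fun t ht => ?_
  obtain ⟨k, rfl⟩ : ∃ k, t = k + 1 := ⟨t - 1, by have := (mem_Icc.1 ht).1; omega⟩
  have hdrift := ftrl_adaptiveWeight_inner_le hK hσ₀ hxK hmin k
  have hreg := mul_nonneg (adaptiveWeight_nonneg (g := g) hσ₀.le (k + 1))
    (sq_nonneg ‖x (k + 1 + 1) - x (k + 1)‖)
  rw [Nat.add_sub_cancel]
  linarith

theorem adaptive_ftrl_regret_le (hK : Convex ℝ K) {D : ℝ}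
    (hD : ∀ a ∈ K, ∀ b ∈ K, ‖a - b‖ ≤ D) (hσ₀ : 0 < σ₀) (hx₁ : x 1 ∈ K)
    (hstep : ∀ t, 1 ≤ t → x (t + 1) ∈ K ∧
      IsMinOn (ftrlObjective (adaptiveWeight σ₀ g) x g t) K (x (t + 1)))
    {s : E} (hs : s ∈ K) (T : ℕ) :
    ∑ t ∈ Icc 1 T, ⟪g t, s - x t⟫ ≤ (σ₀ * D ^ 2 / 2 + 2 / σ₀) * √(cumSqNorm g T) := by
  have hxK : ∀ t, 1 ≤ t → x t ∈ K := Nat.le_induction hx₁ fun t ht _ => (hstep t ht).1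
  have hmin : ∀ t, IsMinOn (ftrlObjective (adaptiveWeight σ₀ g) x g t) K (x (t + 1)) := by
    rintro (_ | t)
    · simp [isMinOn_iff]
    · exact (hstep (t + 1) (by omega)).2
  have hreg : ∑ t ∈ Icc 1 T, adaptiveWeight σ₀ g t / 2 * ‖s - x t‖ ^ 2
      ≤ σ₀ * D ^ 2 / 2 * √(cumSqNorm g T) :=
    calc _ ≤ ∑ t ∈ Icc 1 T, adaptiveWeight σ₀ g t / 2 * D ^ 2 := by
          refine sum_le_sum fun t ht => mul_le_mul_of_nonneg_left ?_
            (by linarith [adaptiveWeight_nonneg (g := g) hσ₀.le t])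
          exact pow_le_pow_left₀ (norm_nonneg _) (hD s hs _ (hxK t (mem_Icc.1 ht).1)) 2
      _ = σ₀ * D ^ 2 / 2 * √(cumSqNorm g T) := by
          rw [← sum_mul, ← sum_div, sum_adaptiveWeight]; ring
  linarith [ftrl_regret_le_of_isMinOn hxK hmin hs T,
    ftrl_adaptiveWeight_sum_drift_le hK hσ₀ hxK hmin T]

end AdaptiveFTRL

end InnerProductSpace

lemma dot_eq_inner {ι : Type*} [Fintype ι] (a b : ι → ℝ) :
    dot a b = ⟪WithLp.toLp 2 a, WithLp.toLp 2 b⟫ := by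
  simp [dot, PiLp.inner_apply, mul_comm]

lemma norm_toLp_sq {ι : Type*} [Fintype ι] (a : ι → ℝ) :
    ‖WithLp.toLp 2 a‖ ^ 2 = ∑ i, a i ^ 2 := by
  simp [EuclideanSpace.norm_sq_eq]

lemma dot_sub_right {ι : Type*} [Fintype ι] (c a b : ι → ℝ) :
    dot c (fun i => a i - b i) = dot c a - dot c b := by
  simp [dot, mul_sub, sum_sub_distrib]

lemma dot_mix {ι : Type*} [Fintype ι] (c p q : ι → ℝ) (a b : ℝ) :
    dot c (fun i => a * p i + b * q i) = a * dot c p + b * dot c q := by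
  simp only [dot, mul_add, sum_add_distrib, mul_sum]
  congr 1 <;> exact sum_congr rfl fun _ _ => by ring

lemma dot_ite_eq {N : ℕ} (a : ℝ) (m : Fin N) (v : Fin N → ℝ) :
    dot (fun n => if n = m then a else 0) v = a * v m := by
  simp [dot]

lemma ftrlObjective_toLp {N : ℕ} (σ : ℕ → ℝ) (x c : ℕ → Fin N → ℝ) (t : ℕ) (y : Fin N → ℝ) :
    ftrlObjective σ (fun τ => WithLp.toLp 2 (x τ)) (fun τ => WithLp.toLp 2 (c τ)) t
        (WithLp.toLp 2 y)
      = (∑ τ ∈ Icc 1 t, σ τ / 2 * ∑ n, (y n - x τ n) ^ 2)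
        - dot (fun n => ∑ τ ∈ Icc 1 t, c τ n) y := by
  simp only [ftrlObjective, sum_sub_distrib, ← WithLp.toLp_sub, norm_toLp_sq, ← dot_eq_inner,
    Pi.sub_apply]
  congr 1
  simp only [dot, sum_mul]
  exact sum_comm

def feasibleSet (N C : ℕ) : Set (EuclideanSpace ℝ (Fin N)) := {x | FeasibleY N C x.ofLp}

lemma convex_feasibleSet (N C : ℕ) : Convex ℝ (feasibleSet N C) := by
  rintro x ⟨hx, hxC⟩ y ⟨hy, hyC⟩ a b ha hb hab
  refine ⟨fun n => ?_, ?_⟩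
  · have := hx n; have := hy n
    simp only [Set.mem_Icc, WithLp.ofLp_add, WithLp.ofLp_smul, Pi.add_apply, Pi.smul_apply,
      smul_eq_mul] at *
    constructor <;> nlinarith
  · simp only [WithLp.ofLp_add, WithLp.ofLp_smul, Pi.add_apply, Pi.smul_apply, smul_eq_mul,
      sum_add_distrib, ← mul_sum]
    nlinarith

lemma norm_sub_le_of_mem_feasibleSet {N C : ℕ} {x y : EuclideanSpace ℝ (Fin N)}
    (hx : x ∈ feasibleSet N C) (hy : y ∈ feasibleSet N C) : ‖x - y‖ ≤ √(2 * C) := by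
  refine Real.le_sqrt_of_sq_le ?_
  rw [EuclideanSpace.norm_sq_eq]
  calc ∑ n, ‖(x - y).ofLp n‖ ^ 2 ≤ ∑ n, (x.ofLp n + y.ofLp n) :=
        sum_le_sum fun n _ => by
          have := hx.1 n; have := hy.1 n
          simp only [Set.mem_Icc, WithLp.ofLp_sub, Pi.sub_apply, Real.norm_eq_abs, sq_abs] at *
          nlinarith
    _ ≤ 2 * C := by rw [sum_add_distrib]; linarith [hx.2, hy.2]

lemma dot_ite_mem_Icc {N C : ℕ} {a w : ℝ} (ha : a ∈ Set.Icc 0 w) (m : Fin N) {z : Fin N → ℝ}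
    (hz : FeasibleY N C z) : dot (fun n => if n = m then a else 0) z ∈ Set.Icc 0 w := by
  rw [dot_ite_eq]
  exact ⟨mul_nonneg ha.1 (hz.1 m).1,
    (mul_le_mul ha.2 (hz.1 m).2 (hz.1 m).1 (ha.1.trans ha.2)).trans_eq (mul_one w)⟩

lemma neg_mul_le_sum_dot_sub {N : ℕ} {w : ℝ} {c z : ℕ → Fin N → ℝ} {s : Fin N → ℝ} {T : ℕ}
    (hs : ∀ t, 0 ≤ dot (c t) s) (hz : ∀ t, 1 ≤ t → dot (c t) (z t) ≤ w) :
    -(w * T) ≤ ∑ t ∈ Icc 1 T, dot (c t) (fun n => s n - z t n) :=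
  calc -(w * T) = ∑ t ∈ Icc 1 T, -w := by simp; ring
    _ ≤ _ := sum_le_sum fun t ht => by
      rw [dot_sub_right]; linarith [hs t, hz t (mem_Icc.1 ht).1]

lemma pessimistic_regret_le (N C T : ℕ) (hC : 1 ≤ C) (w : ℝ) (hw : 0 ≤ w)
    (c : ℕ → Fin N → ℝ) (hcw : ∀ t, ∑ n, c t n ^ 2 ≤ w ^ 2)
    (G : ℕ → ℝ) (hG : ∀ t, G t = ∑ τ ∈ Icc 1 t, ∑ n, (c τ n) ^ 2)
    (σ : ℝ) (hσ : σ = 2 / √(2 * (C : ℝ)))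
    (σt : ℕ → ℝ) (hσt : ∀ t, σt t = σ * (√(G t) - √(G (t - 1))))
    (yp : ℕ → Fin N → ℝ) (hyp1 : FeasibleY N C (yp 1))
    (hpstep : ∀ t, 1 ≤ t →
      FeasibleY N C (yp (t + 1)) ∧
      ∀ y', FeasibleY N C y' →
        (∑ τ ∈ Icc 1 t, σt τ / 2 * ∑ n, (yp (t + 1) n - yp τ n) ^ 2)
            - dot (fun n => ∑ τ ∈ Icc 1 t, c τ n) (yp (t + 1))
          ≤ (∑ τ ∈ Icc 1 t, σt τ / 2 * ∑ n, (y' n - yp τ n) ^ 2)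
            - dot (fun n => ∑ τ ∈ Icc 1 t, c τ n) y')
    (ystar : Fin N → ℝ) (hystar : FeasibleY N C ystar) :
    ∑ t ∈ Icc 1 T, dot (c t) (fun n => ystar n - yp t n) ≤ 2 * w * √(2 * C * T) := by
  set x : ℕ → EuclideanSpace ℝ (Fin N) := fun t => WithLp.toLp 2 (yp t)
  set g : ℕ → EuclideanSpace ℝ (Fin N) := fun t => WithLp.toLp 2 (c t)
  have hGg : G = cumSqNorm g := funext fun t => by simp [hG, cumSqNorm, g, norm_toLp_sq]
  have hσt' : σt = adaptiveWeight σ g := funext fun t => by rw [hσt, hGg]; rfl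
  have hstep : ∀ t, 1 ≤ t → x (t + 1) ∈ feasibleSet N C ∧
      IsMinOn (ftrlObjective (adaptiveWeight σ g) x g t) (feasibleSet N C) (x (t + 1)) := by
    intro t ht
    refine ⟨(hpstep t ht).1, isMinOn_iff.2 fun v hv => ?_⟩
    rw [← hσt', ← WithLp.toLp_ofLp 2 v, ftrlObjective_toLp, ftrlObjective_toLp]
    exact (hpstep t ht).2 v.ofLp hv
  have hr : 0 < √(2 * (C : ℝ)) := Real.sqrt_pos.2 (by positivity)
  have hbound := adaptive_ftrl_regret_le (convex_feasibleSet N C)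
    (fun a ha b hb => norm_sub_le_of_mem_feasibleSet ha hb) (hσ ▸ div_pos two_pos hr)
    hyp1 hstep (s := WithLp.toLp 2 ystar) hystar T
  have hGT : √(cumSqNorm g T) ≤ w * √(T : ℝ) :=
    sqrt_cumSqNorm_le hw (fun t => (norm_toLp_sq (c t)).trans_le (hcw t)) T
  have hconst : σ * √(2 * C) ^ 2 / 2 + 2 / σ = 2 * √(2 * C) := by
    rw [hσ]; field_simp; ring
  simp only [dot_eq_inner] at hbound ⊢
  rw [hconst] at hbound
  calc _ ≤ 2 * √(2 * C) * √(cumSqNorm g T) := hbound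
    _ ≤ 2 * √(2 * C) * (w * √T) := by gcongr
    _ = 2 * w * √(2 * C * T) := by rw [Real.sqrt_mul (by positivity : (0 : ℝ) ≤ 2 * C) T]; ring

lemma sum_sq_sub_eq_of_add_eq_one {v : Fin 2 → ℝ} (hv : v 0 + v 1 = 1) (z : Fin 2 → ℝ) :
    ∑ k, (v k - z k) ^ 2 = 2 * (v 0 - (z 0 - z 1 + 1) / 2) ^ 2 + (z 0 + z 1 - 1) ^ 2 / 2 := by
  rw [Fin.sum_univ_two, show v 1 = 1 - v 0 by linarith]
  ring

lemma isMinOn_Icc_of_isMinOn_simplex2 {u l p : Fin 2 → ℝ} {η : ℝ} (hu : u 0 + u 1 = 1)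
    (hp : Simplex2 p)
    (hmin : ∀ v, Simplex2 v →
      ∑ k, (p k - (u k + η * l k)) ^ 2 ≤ ∑ k, (v k - (u k + η * l k)) ^ 2) :
    IsMinOn (fun a : ℝ => ‖a - (u 0 + (η / 2) • (l 0 - l 1))‖ ^ 2) (Set.Icc 0 1) (p 0) := by
  refine isMinOn_iff.2 fun a ⟨ha₀, ha₁⟩ => ?_
  have hv : Simplex2 ![a, 1 - a] := ⟨ha₀, by simpa using ha₁, by simp⟩
  have hle := hmin _ hv
  have hcenter : u 0 + (η / 2) • (l 0 - l 1) = (u 0 + η * l 0 - (u 1 + η * l 1) + 1) / 2 := by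
    rw [smul_eq_mul]; linear_combination hu / 2
  rw [sum_sq_sub_eq_of_add_eq_one hp.2.2, sum_sq_sub_eq_of_add_eq_one hv.2.2] at hle
  simp only [Real.norm_eq_abs, sq_abs, hcenter]
  simp only [Matrix.cons_val_zero] at hle
  linarith

lemma sum_Icc_sq_div_le {w : ℝ} (hw : 0 < w) {g : ℕ → ℝ} (hg : ∀ t, 1 ≤ t → |g t| ≤ w)
    (T : ℕ) : ∑ t ∈ Icc 1 T, ‖g t‖ ^ 2 / (2 * (2 * w * √(t : ℝ))) ≤ w / 2 * √(T : ℝ) :=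
  calc _ ≤ ∑ t ∈ Icc 1 T, w / 4 * (√(t : ℝ))⁻¹ := by
        refine sum_le_sum fun t ht => ?_
        have ht₁ := (mem_Icc.1 ht).1
        have hsq : 0 < √(t : ℝ) := Real.sqrt_pos.2 (by exact_mod_cast ht₁)
        rw [Real.norm_eq_abs, div_le_iff₀ (by positivity)]
        field_simp
        nlinarith [hg t ht₁, abs_nonneg (g t)]
    _ ≤ w / 4 * (2 * √(T : ℝ)) := by rw [← mul_sum]; gcongr; exact sum_Icc_inv_sqrt_le T
    _ = w / 2 * √(T : ℝ) := by ring

lemma simplex2_ogd_regret_le (w : ℝ) (hw : 0 < w) (l u : ℕ → Fin 2 → ℝ)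
    (hl : ∀ t, 1 ≤ t → |l t 0 - l t 1| ≤ w) (hu1 : Simplex2 (u 1))
    (hustep : ∀ t, 1 ≤ t →
      Simplex2 (u (t + 1)) ∧
      ∀ v, Simplex2 v →
        ∑ k, (u (t + 1) k - (u t k + 1 / (w * √(t : ℝ)) * l t k)) ^ 2
          ≤ ∑ k, (v k - (u t k + 1 / (w * √(t : ℝ)) * l t k)) ^ 2)
    (T : ℕ) (k : Fin 2) :
    ∑ t ∈ Icc 1 T, (l t k - dot (u t) (l t)) ≤ 3 / 2 * w * √(T : ℝ) := by
  have hu : ∀ t, 1 ≤ t → Simplex2 (u t) := Nat.le_induction hu1 fun t ht _ => (hustep t ht).1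
  have hstep : ∀ t, 1 ≤ t → u (t + 1) 0 ∈ Set.Icc (0 : ℝ) 1 ∧
      IsMinOn (fun a => ‖a - (u t 0 + (2 * w * √(t : ℝ))⁻¹ • (l t 0 - l t 1))‖ ^ 2)
        (Set.Icc 0 1) (u (t + 1) 0) := by
    intro t ht
    obtain ⟨h₀, h₁, hsum⟩ := (hustep t ht).1
    refine ⟨⟨h₀, by linarith⟩, ?_⟩
    convert isMinOn_Icc_of_isMinOn_simplex2 (hu t ht).2.2 (hustep t ht).1 (hustep t ht).2
      using 6
    ring
  have hogd : ∀ s ∈ Set.Icc (0 : ℝ) 1,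
      ∑ t ∈ Icc 1 T, (l t 0 - l t 1) * (s - u t 0) ≤ 3 / 2 * w * √(T : ℝ) := by
    intro s hs
    have h := ogd_regret_le (convex_Icc (0 : ℝ) 1) (D := 1)
      (fun a ha b hb => dist_eq_norm a b ▸ Real.dist_le_of_mem_Icc_01 ha hb)
      (x := fun t => u t 0) (g := fun t => l t 0 - l t 1) (β := fun t => 2 * w * √(t : ℝ))
      (fun i j hij => by dsimp; gcongr) (by simp) (fun t ht => by positivity)
      ⟨hu1.1, by linarith [hu1.2.1, hu1.2.2]⟩ hstep hs T
    simp only [Real.inner_apply, one_pow, mul_one] at h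
    linarith [sum_Icc_sq_div_le hw (g := fun t => l t 0 - l t 1) hl T]
  have hmix : ∀ s, ∀ t ∈ Icc 1 T,
      (l t 0 - l t 1) * (s - u t 0) = s * l t 0 + (1 - s) * l t 1 - dot (u t) (l t) := by
    intro s t ht
    simp only [dot, Fin.sum_univ_two]
    linear_combination l t 1 * (hu t (mem_Icc.1 ht).1).2.2
  revert k
  rw [Fin.forall_fin_two]
  constructor
  · have h := hogd 1 ⟨zero_le_one, le_rfl⟩
    rw [sum_congr rfl (hmix 1)] at h
    simpa using h
  · have h := hogd 0 ⟨le_rfl, zero_le_one⟩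
    rw [sum_congr rfl (hmix 0)] at h
    simpa using h

lemma three_halves_mul_sqrt_le {w : ℝ} (hw : 0 ≤ w) (T : ℕ) :
    3 / 2 * w * √(T : ℝ) ≤ 2 * w * √(2 * (T : ℝ)) := by
  rw [Real.sqrt_mul zero_le_two]
  have hwT := mul_nonneg hw (Real.sqrt_nonneg (T : ℝ))
  nlinarith [mul_nonneg hwT (sub_nonneg.2 Real.one_lt_sqrt_two.le)]

theorem xc_regret_general
    (N C T : ℕ) (hC : 1 ≤ C)
    (w : ℝ) (hw : 0 < w)
    (wt : ℕ → ℝ) (hwt : ∀ t, wt t ∈ Set.Icc 0 w) (nt : ℕ → Fin N)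
    -- utility gradients `c_t = w_t e_{n_t}`
    (c : ℕ → Fin N → ℝ) (hc : ∀ t, c t = fun n => if n = nt t then wt t else 0)
    -- predictions
    (ctil : ℕ → Fin N → ℝ)
    -- pessimistic expert: FTRL with zero predictions
    (G : ℕ → ℝ) (hG : ∀ t, G t = ∑ τ ∈ Finset.Icc 1 t, ∑ n, (c τ n) ^ 2)
    (σ : ℝ) (hσ : σ = 2 / Real.sqrt (2 * (C : ℝ)))
    (σt : ℕ → ℝ) (hσt : ∀ t, σt t = σ * (Real.sqrt (G t) - Real.sqrt (G (t - 1))))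
    (yp : ℕ → Fin N → ℝ)
    (hyp1 : FeasibleY N C (yp 1))
    (hpstep : ∀ t, 1 ≤ t →
      FeasibleY N C (yp (t + 1)) ∧
      ∀ y', FeasibleY N C y' →
        (∑ τ ∈ Finset.Icc 1 t, σt τ / 2 * ∑ n, (yp (t + 1) n - yp τ n) ^ 2)
            - dot (fun n => ∑ τ ∈ Finset.Icc 1 t, c τ n) (yp (t + 1))
          ≤ (∑ τ ∈ Finset.Icc 1 t, σt τ / 2 * ∑ n, (y' n - yp τ n) ^ 2)
            - dot (fun n => ∑ τ ∈ Finset.Icc 1 t, c τ n) y')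
    -- optimistic expert: plays a maximizer of the predicted utility
    (yo : ℕ → Fin N → ℝ)
    -- experts' utility vectors `l_t = (c_t·y_t^{(p)}, c_t·y_t^{(o)})`
    (l : ℕ → Fin 2 → ℝ) (hl : ∀ t, l t = ![dot (c t) (yp t), dot (c t) (yo t)])
    -- meta-learner: online gradient ascent on the simplex
    (u : ℕ → Fin 2 → ℝ) (hu1 : Simplex2 (u 1))
    (hustep : ∀ t, 1 ≤ t →
      Simplex2 (u (t + 1)) ∧
      ∀ v, Simplex2 v →
        ∑ k, (u (t + 1) k - (u t k + 1 / (w * Real.sqrt (t : ℝ)) * l t k)) ^ 2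
          ≤ ∑ k, (v k - (u t k + 1 / (w * Real.sqrt (t : ℝ)) * l t k)) ^ 2)
    -- combined caching decisions
    (y : ℕ → Fin N → ℝ)
    (hy : ∀ t, y t = fun n => u t 0 * yp t n + u t 1 * yo t n)
    -- best static configuration in hindsight
    (ystar : Fin N → ℝ) (hystar : FeasibleY N C ystar)
    (hyo1 : FeasibleY N C (yo 1))
    (hostep : ∀ t, 1 ≤ t →
      FeasibleY N C (yo (t + 1)) ∧
      ∀ y', FeasibleY N C y' →
        dot (ctil (t + 1)) y' ≤ dot (ctil (t + 1)) (yo (t + 1))) :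
    (∑ t ∈ Finset.Icc 1 T, dot (c t) (fun n => ystar n - y t n)
        ≤ 2 * w * Real.sqrt (2 * (T : ℝ))
          + min (∑ t ∈ Finset.Icc 1 T, dot (c t) (fun n => ystar n - yp t n))
                (∑ t ∈ Finset.Icc 1 T, dot (c t) (fun n => ystar n - yo t n))) ∧
    (-(w * (T : ℝ))
        ≤ min (∑ t ∈ Finset.Icc 1 T, dot (c t) (fun n => ystar n - yp t n))
              (∑ t ∈ Finset.Icc 1 T, dot (c t) (fun n => ystar n - yo t n))) ∧
    (min (∑ t ∈ Finset.Icc 1 T, dot (c t) (fun n => ystar n - yp t n))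
         (∑ t ∈ Finset.Icc 1 T, dot (c t) (fun n => ystar n - yo t n))
        ≤ 2 * w * Real.sqrt (2 * (C : ℝ) * (T : ℝ))) ∧
    (∑ t ∈ Finset.Icc 1 T, dot (c t) (fun n => ystar n - y t n)
        ≤ 2 * w * Real.sqrt (2 * (T : ℝ)) + 2 * w * Real.sqrt (2 * (C : ℝ) * (T : ℝ))) := by
  have hyp : ∀ t, 1 ≤ t → FeasibleY N C (yp t) :=
    Nat.le_induction hyp1 fun t ht _ => (hpstep t ht).1
  have hyo : ∀ t, 1 ≤ t → FeasibleY N C (yo t) :=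
    Nat.le_induction hyo1 fun t ht _ => (hostep t ht).1
  have hdot : ∀ t z, FeasibleY N C z → dot (c t) z ∈ Set.Icc 0 w := fun t z hz =>
    hc t ▸ dot_ite_mem_Icc (hwt t) (nt t) hz
  have hRp := pessimistic_regret_le N C T hC w hw.le c
    (fun t => by simpa [hc t] using pow_le_pow_left₀ (hwt t).1 (hwt t).2 2)
    G hG σ hσ σt hσt yp hyp1 hpstep ystar hystar
  have hmeta := simplex2_ogd_regret_le w hw l u (fun t ht => by
    simpa [hl] using abs_sub_le_of_nonneg_of_le (hdot t _ (hyp t ht)).1 (hdot t _ (hyp t ht)).2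
      (hdot t _ (hyo t ht)).1 (hdot t _ (hyo t ht)).2) hu1 hustep T
  have hxc : ∀ (z : ℕ → Fin N → ℝ) (k : Fin 2), (∀ t, l t k = dot (c t) (z t)) →
      ∑ t ∈ Icc 1 T, dot (c t) (fun n => ystar n - y t n)
        ≤ 2 * w * √(2 * (T : ℝ)) + ∑ t ∈ Icc 1 T, dot (c t) (fun n => ystar n - z t n) := by
    intro z k hz
    have hk := (hmeta k).trans (three_halves_mul_sqrt_le hw.le T)
    have hcomb : ∀ t, dot (c t) (y t) = dot (u t) (l t) := fun t => by
      rw [hy, dot_mix, hl]; simp [dot, Fin.sum_univ_two]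
    simp only [dot_sub_right, sum_sub_distrib, hcomb, hz] at hk ⊢
    linarith
  have hxp := hxc yp 0 fun t => by simp [hl]
  have hxo := hxc yo 1 fun t => by simp [hl]
  have hlow : ∀ z : ℕ → Fin N → ℝ, (∀ t, 1 ≤ t → FeasibleY N C (z t)) →
      -(w * T) ≤ ∑ t ∈ Icc 1 T, dot (c t) (fun n => ystar n - z t n) := fun z hz =>
    neg_mul_le_sum_dot_sub (fun t => (hdot t _ hystar).1) fun t ht => (hdot t _ (hz t ht)).2
  refine ⟨?_, le_min (hlow yp hyp) (hlow yo hyo), (min_le_left _ _).trans hRp,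
    hxp.trans (by linarith)⟩
  rw [← min_add_add_left]
  exact le_min hxp hxo

/-- **Theorem 3 (XC regret bound).** Algorithm XC ensures
`R^{(xc)} = ∑_{t=1}^T c_t·(y⋆ − y_t) ≤ 2w√(2T) + A` with
`A = min{R^{(p)}, R^{(o)}} ∈ [−wT, 2w√(2CT)]`; in particular
`R^{(xc)} ≤ 2w√(2T) + 2w√(2CT)`. -/
theorem xc_regret
    (N C T : ℕ) (hN : 1 ≤ N) (hC : 1 ≤ C) (hCN : C < N) (hT : 1 ≤ T)
    (w : ℝ) (hw : 0 < w)
    (wt : ℕ → ℝ) (hwt : ∀ t, wt t ∈ Set.Icc 0 w) (nt : ℕ → Fin N)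
    -- utility gradients `c_t = w_t e_{n_t}`
    (c : ℕ → Fin N → ℝ) (hc : ∀ t, c t = fun n => if n = nt t then wt t else 0)
    -- predictions
    (ctil : ℕ → Fin N → ℝ)
    (wtil : ℕ → ℝ) (hwtil : ∀ t, wtil t ∈ Set.Icc 0 w) (ntil : ℕ → Fin N)
    (hctil : ∀ t, ctil t = fun n => if n = ntil t then wtil t else 0)
    -- pessimistic expert: FTRL with zero predictions
    (G : ℕ → ℝ) (hG : ∀ t, G t = ∑ τ ∈ Finset.Icc 1 t, ∑ n, (c τ n) ^ 2)
    (σ : ℝ) (hσ : σ = 2 / Real.sqrt (2 * (C : ℝ)))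
    (σt : ℕ → ℝ) (hσt : ∀ t, σt t = σ * (Real.sqrt (G t) - Real.sqrt (G (t - 1))))
    (yp : ℕ → Fin N → ℝ)
    (hyp1 : FeasibleY N C (yp 1))
    (hpstep : ∀ t, 1 ≤ t →
      FeasibleY N C (yp (t + 1)) ∧
      ∀ y', FeasibleY N C y' →
        (∑ τ ∈ Finset.Icc 1 t, σt τ / 2 * ∑ n, (yp (t + 1) n - yp τ n) ^ 2)
            - dot (fun n => ∑ τ ∈ Finset.Icc 1 t, c τ n) (yp (t + 1))
          ≤ (∑ τ ∈ Finset.Icc 1 t, σt τ / 2 * ∑ n, (y' n - yp τ n) ^ 2)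
            - dot (fun n => ∑ τ ∈ Finset.Icc 1 t, c τ n) y')
    -- optimistic expert: plays a maximizer of the predicted utility
    (yo : ℕ → Fin N → ℝ)
    -- experts' utility vectors `l_t = (c_t·y_t^{(p)}, c_t·y_t^{(o)})`
    (l : ℕ → Fin 2 → ℝ) (hl : ∀ t, l t = ![dot (c t) (yp t), dot (c t) (yo t)])
    -- meta-learner: online gradient ascent on the simplex
    (u : ℕ → Fin 2 → ℝ) (hu1 : Simplex2 (u 1))
    (hustep : ∀ t, 1 ≤ t →
      Simplex2 (u (t + 1)) ∧
      ∀ v, Simplex2 v →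
        ∑ k, (u (t + 1) k - (u t k + 1 / (w * Real.sqrt (t : ℝ)) * l t k)) ^ 2
          ≤ ∑ k, (v k - (u t k + 1 / (w * Real.sqrt (t : ℝ)) * l t k)) ^ 2)
    -- combined caching decisions
    (y : ℕ → Fin N → ℝ)
    (hy : ∀ t, y t = fun n => u t 0 * yp t n + u t 1 * yo t n)
    -- best static configuration in hindsight
    (ystar : Fin N → ℝ) (hystar : FeasibleY N C ystar)
    (hystarmax : ∀ y', FeasibleY N C y' →
      ∑ t ∈ Finset.Icc 1 T, dot (c t) y' ≤ ∑ t ∈ Finset.Icc 1 T, dot (c t) ystar)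
    (hyo1 : FeasibleY N C (yo 1))
    (hostep : ∀ t, 1 ≤ t →
      FeasibleY N C (yo (t + 1)) ∧
      ∀ y', FeasibleY N C y' →
        dot (ctil (t + 1)) y' ≤ dot (ctil (t + 1)) (yo (t + 1))) :
    (∑ t ∈ Finset.Icc 1 T, dot (c t) (fun n => ystar n - y t n)
        ≤ 2 * w * Real.sqrt (2 * (T : ℝ))
          + min (∑ t ∈ Finset.Icc 1 T, dot (c t) (fun n => ystar n - yp t n))
                (∑ t ∈ Finset.Icc 1 T, dot (c t) (fun n => ystar n - yo t n))) ∧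
    (-(w * (T : ℝ))
        ≤ min (∑ t ∈ Finset.Icc 1 T, dot (c t) (fun n => ystar n - yp t n))
              (∑ t ∈ Finset.Icc 1 T, dot (c t) (fun n => ystar n - yo t n))) ∧
    (min (∑ t ∈ Finset.Icc 1 T, dot (c t) (fun n => ystar n - yp t n))
         (∑ t ∈ Finset.Icc 1 T, dot (c t) (fun n => ystar n - yo t n))
        ≤ 2 * w * Real.sqrt (2 * (C : ℝ) * (T : ℝ))) ∧
    (∑ t ∈ Finset.Icc 1 T, dot (c t) (fun n => ystar n - y t n)
        ≤ 2 * w * Real.sqrt (2 * (T : ℝ)) + 2 * w * Real.sqrt (2 * (C : ℝ) * (T : ℝ))) :=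
  xc_regret_general N C T hC w hw wt hwt nt c hc ctil G hG σ hσ σt hσt yp hyp1 hpstep yo l hl u hu1
    hustep y hy ystar hystar hyo1 hostep
end
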